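/- arXiv:1503.05101 — 2 statements merged into one kernel-verified Lean document; each statement's English description precedes it below -/
import Mathlib

section
/- For nonnegative integers k and l, the function ψ(x) = e^{−|x|²/2} · |x|^l · L_k^{l+1/2}(|x|²) · Y(x/|x|), where Y is a spherical harmonic of degree l on S², satisfies −Δψ + |x|²ψ = (4k + 2l + 3)ψ on ℝ³. -/
noncomputable def laplacian {F : Type*} [NormedAddCommGroup F] [NormedSpace ℝ F]
    (f : EuclideanSpace ℝ (Fin 3) → F) (x : EuclideanSpace ℝ (Fin 3)) : F :=
  ∑ i : Fin 3, fderiv ℝ (fun y => fderiv ℝ f y (EuclideanSpace.single i 1)) x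
      (EuclideanSpace.single i 1)

/-- The generalized Laguerre polynomial `L_k^α`. -/
noncomputable def laguerre (k : ℕ) (α : ℝ) (x : ℝ) : ℝ :=
  ∑ i ∈ Finset.range (k + 1),
    (-1 : ℝ) ^ i * (Real.Gamma ((k : ℝ) + α + 1) /
      (Real.Gamma ((i : ℝ) + α + 1) * (Nat.factorial (k - i)) * (Nat.factorial i))) * x ^ i

open Finset

/-- Coefficients of the Laguerre polynomial. -/
noncomputable def lagC (k : ℕ) (α : ℝ) (i : ℕ) : ℝ :=
  (-1 : ℝ) ^ i * (Real.Gamma ((k : ℝ) + α + 1) /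
      (Real.Gamma ((i : ℝ) + α + 1) * (Nat.factorial (k - i)) * (Nat.factorial i)))

lemma laguerre_eq (k : ℕ) (α : ℝ) (x : ℝ) :
    laguerre k α x = ∑ i ∈ range (k + 1), lagC k α i * x ^ i := rfl

noncomputable def lagD (k : ℕ) (α : ℝ) (x : ℝ) : ℝ :=
  ∑ i ∈ range (k + 1), lagC k α i * ((i : ℝ) * x ^ (i - 1))

noncomputable def lagD2 (k : ℕ) (α : ℝ) (x : ℝ) : ℝ :=
  ∑ i ∈ range (k + 1), lagC k α i * ((i : ℝ) * (((i - 1 : ℕ) : ℝ) * x ^ (i - 1 - 1)))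

lemma hasDerivAt_laguerre (k : ℕ) (α : ℝ) (x : ℝ) :
    HasDerivAt (laguerre k α) (lagD k α x) x := by
  have h : ∀ i ∈ range (k + 1), HasDerivAt (fun x : ℝ => lagC k α i * x ^ i)
      (lagC k α i * ((i : ℝ) * x ^ (i - 1))) x :=
    fun i _ => (hasDerivAt_pow i x).const_mul _
  exact HasDerivAt.fun_sum h

lemma hasDerivAt_lagD (k : ℕ) (α : ℝ) (x : ℝ) :
    HasDerivAt (lagD k α) (lagD2 k α x) x := by
  have h : ∀ i ∈ range (k + 1), HasDerivAt (fun x : ℝ => lagC k α i * ((i : ℝ) * x ^ (i - 1)))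
      (lagC k α i * ((i : ℝ) * (((i - 1 : ℕ) : ℝ) * x ^ (i - 1 - 1)))) x := by
    intro i _
    have h1 : (fun x : ℝ => lagC k α i * ((i : ℝ) * x ^ (i - 1)))
        = fun x : ℝ => (lagC k α i * (i : ℝ)) * x ^ (i - 1) := by funext x; ring
    rw [h1]
    have := (hasDerivAt_pow (i - 1) x).const_mul (lagC k α i * (i : ℝ))
    exact this.congr_deriv (by ring)
  exact HasDerivAt.fun_sum h

lemma laguerre_ode (k : ℕ) (α : ℝ) (hα : 0 < α) (x : ℝ) :
    x * lagD2 k α x + (α + 1 - x) * lagD k α x + (k : ℝ) * laguerre k α x = 0 := by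
  have key : ∀ j, j < k →
      lagC k α (j + 1) * (((j : ℝ) + 1) * (((j : ℝ) + 1) + α)) + lagC k α j * ((k : ℝ) - (j : ℝ)) = 0 := by
    intro j hj
    obtain ⟨m, rfl⟩ : ∃ m, k = j + 1 + m := ⟨k - (j + 1), by omega⟩
    have hG1 : 0 < Real.Gamma ((j : ℝ) + α + 1) := Real.Gamma_pos_of_pos (by positivity)
    have hGrec : Real.Gamma (((j : ℝ) + 1) + α + 1) = ((j : ℝ) + α + 1) * Real.Gamma ((j : ℝ) + α + 1) := by
      have h : ((j : ℝ) + 1) + α + 1 = ((j : ℝ) + α + 1) + 1 := by ring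
      rw [h, Real.Gamma_add_one (by positivity)]
    have h1 : j + 1 + m - (j + 1) = m := by omega
    have h2 : j + 1 + m - j = m + 1 := by omega
    unfold lagC
    rw [h1, h2]
    push_cast [hGrec, Nat.factorial_succ, pow_succ]
    have hf1 : (Nat.factorial m : ℝ) ≠ 0 := Nat.cast_ne_zero.mpr (Nat.factorial_ne_zero m)
    have hf2 : (Nat.factorial j : ℝ) ≠ 0 := Nat.cast_ne_zero.mpr (Nat.factorial_ne_zero j)
    have hne : ((j : ℝ) + α + 1) ≠ 0 := by positivity
    field_simp
    ring
  have expand : x * lagD2 k α x + (α + 1 - x) * lagD k α x + (k : ℝ) * laguerre k α x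
      = (∑ i ∈ range (k + 1), lagC k α i * ((i : ℝ) * (((i : ℝ) + α) * x ^ (i - 1))))
        + ∑ i ∈ range (k + 1), lagC k α i * (((k : ℝ) - (i : ℝ)) * x ^ i) := by
    unfold lagD lagD2
    rw [laguerre_eq, Finset.mul_sum, Finset.mul_sum, Finset.mul_sum,
      ← Finset.sum_add_distrib, ← Finset.sum_add_distrib, ← Finset.sum_add_distrib]
    apply Finset.sum_congr rfl
    intro i _
    rcases i with _ | j
    · simp; ring
    · rcases j with _ | m
      · push_cast; ring
      · simp only [Nat.add_sub_cancel]
        push_cast [pow_succ]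
        ring
  rw [expand]
  rw [Finset.sum_range_succ' (fun i => lagC k α i * ((i : ℝ) * (((i : ℝ) + α) * x ^ (i - 1)))) k,
    Finset.sum_range_succ]
  simp only [Nat.cast_zero, zero_mul, mul_zero, add_zero, sub_self, zero_add]
  rw [← Finset.sum_add_distrib]
  apply Finset.sum_eq_zero
  intro j hj
  have hk := key j (Finset.mem_range.mp hj)
  simp only [Nat.add_sub_cancel]
  push_cast
  linear_combination (x ^ j) * hk

noncomputable def Ff (k l : ℕ) (s : ℝ) : ℝ := Real.exp (-s / 2) * laguerre k ((l : ℝ) + 1 / 2) s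

noncomputable def Ff1 (k l : ℕ) (s : ℝ) : ℝ :=
  Real.exp (-s / 2) * (lagD k ((l : ℝ) + 1 / 2) s - laguerre k ((l : ℝ) + 1 / 2) s / 2)

noncomputable def Ff2 (k l : ℕ) (s : ℝ) : ℝ :=
  Real.exp (-s / 2) * (lagD2 k ((l : ℝ) + 1 / 2) s - lagD k ((l : ℝ) + 1 / 2) s
    + laguerre k ((l : ℝ) + 1 / 2) s / 4)

lemma hasDerivAt_exp_neg_half (s : ℝ) :
    HasDerivAt (fun s : ℝ => Real.exp (-s / 2)) (Real.exp (-s / 2) * (-1 / 2)) s := by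
  have h : HasDerivAt (fun s : ℝ => -s / 2) (-1 / 2) s := by
    simpa using ((hasDerivAt_id s).neg.div_const 2)
  exact h.exp

lemma hasDerivAt_Ff (k l : ℕ) (s : ℝ) : HasDerivAt (Ff k l) (Ff1 k l s) s := by
  have h := (hasDerivAt_exp_neg_half s).mul (hasDerivAt_laguerre k ((l : ℝ) + 1 / 2) s)
  have hv : Ff1 k l s = Real.exp (-s / 2) * (-1 / 2) * laguerre k ((l : ℝ) + 1 / 2) s
      + Real.exp (-s / 2) * lagD k ((l : ℝ) + 1 / 2) s := by
    unfold Ff1; ring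
  rw [hv]
  exact h

lemma hasDerivAt_Ff1 (k l : ℕ) (s : ℝ) : HasDerivAt (Ff1 k l) (Ff2 k l s) s := by
  have h := (hasDerivAt_exp_neg_half s).mul
    ((hasDerivAt_lagD k ((l : ℝ) + 1 / 2) s).sub
      ((hasDerivAt_laguerre k ((l : ℝ) + 1 / 2) s).div_const 2))
  have hv : Ff2 k l s = Real.exp (-s / 2) * (-1 / 2)
        * (lagD k ((l : ℝ) + 1 / 2) s - laguerre k ((l : ℝ) + 1 / 2) s / 2)
      + Real.exp (-s / 2) * (lagD2 k ((l : ℝ) + 1 / 2) s - lagD k ((l : ℝ) + 1 / 2) s / 2) := by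
    unfold Ff2; ring
  rw [hv]
  exact h

lemma Ff_ode (k l : ℕ) (s : ℝ) :
    4 * s * Ff2 k l s + (4 * (l : ℝ) + 6) * Ff1 k l s
      + ((4 * (k : ℝ) + 2 * (l : ℝ) + 3) - s) * Ff k l s = 0 := by
  have h := laguerre_ode k ((l : ℝ) + 1 / 2) (by positivity) s
  unfold Ff Ff1 Ff2
  linear_combination (4 * Real.exp (-s / 2)) * h

theorem harmonic_oscillator_eigenfunction (k l : ℕ) (P : EuclideanSpace ℝ (Fin 3) → ℝ)
    (hP : ContDiff ℝ (⊤ : ℕ∞) P) (hharm : ∀ x, laplacian P x = 0)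
    (hhom : ∀ (c : ℝ) (x : EuclideanSpace ℝ (Fin 3)), P (c • x) = c ^ l * P x) :
    ∀ x : EuclideanSpace ℝ (Fin 3),
      -laplacian (fun y => Real.exp (-‖y‖ ^ 2 / 2) *
          laguerre k ((l : ℝ) + 1 / 2) (‖y‖ ^ 2) * P y) x +
        ‖x‖ ^ 2 * (Real.exp (-‖x‖ ^ 2 / 2) * laguerre k ((l : ℝ) + 1 / 2) (‖x‖ ^ 2) * P x) =
      (4 * k + 2 * l + 3) *
        (Real.exp (-‖x‖ ^ 2 / 2) * laguerre k ((l : ℝ) + 1 / 2) (‖x‖ ^ 2) * P x) := by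
  intro x
  have hPdiff : Differentiable ℝ P := hP.differentiable (by simp)
  set e : Fin 3 → EuclideanSpace ℝ (Fin 3) := fun i => EuclideanSpace.single i (1 : ℝ) with he
  -- derivative of the squared norm
  have hq : ∀ y : EuclideanSpace ℝ (Fin 3),
      HasFDerivAt (fun y : EuclideanSpace ℝ (Fin 3) => ‖y‖ ^ 2) (2 • (innerSL ℝ y)) y :=
    fun y => (hasStrictFDerivAt_norm_sq y).hasFDerivAt
  -- smoothness of the directional derivatives of P
  have hΦc : ∀ i : Fin 3, ContDiff ℝ (⊤ : ℕ∞) (fun y => fderiv ℝ P y (e i)) :=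
    fun i => (hP.fderiv_right (mod_cast le_top)).clm_apply contDiff_const
  -- first derivative of ψ
  have hψ : ∀ y : EuclideanSpace ℝ (Fin 3),
      HasFDerivAt (fun y : EuclideanSpace ℝ (Fin 3) => Ff k l (‖y‖ ^ 2) * P y)
        ((Ff k l (‖y‖ ^ 2)) • (fderiv ℝ P y)
          + (P y) • ((Ff1 k l (‖y‖ ^ 2)) • ((2 : ℕ) • innerSL ℝ y))) y := by
    intro y
    exact ((hasDerivAt_Ff k l (‖y‖ ^ 2)).comp_hasFDerivAt y (hq y)).mul (hPdiff y).hasFDerivAt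
  have hfd1 : ∀ i : Fin 3,
      (fun y => fderiv ℝ (fun z : EuclideanSpace ℝ (Fin 3) => Ff k l (‖z‖ ^ 2) * P z) y (e i))
        = fun y => Ff1 k l (‖y‖ ^ 2) * (2 * y i) * P y
            + Ff k l (‖y‖ ^ 2) * (fderiv ℝ P y (e i)) := by
    intro i
    funext y
    rw [(hψ y).fderiv]
    simp [he, EuclideanSpace.inner_single_right]
    ring
  set u : ℝ := ‖x‖ ^ 2 with hu
  have hA : HasFDerivAt (fun y : EuclideanSpace ℝ (Fin 3) => Ff1 k l (‖y‖ ^ 2))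
      ((Ff2 k l u) • ((2 : ℕ) • innerSL ℝ x)) x := by
    exact (hasDerivAt_Ff1 k l u).comp_hasFDerivAt x (hq x)
  have hE2 : HasFDerivAt (fun y : EuclideanSpace ℝ (Fin 3) => Ff k l (‖y‖ ^ 2))
      ((Ff1 k l u) • ((2 : ℕ) • innerSL ℝ x)) x := by
    exact (hasDerivAt_Ff k l u).comp_hasFDerivAt x (hq x)
  have hC : HasFDerivAt P (fderiv ℝ P x) x := (hPdiff x).hasFDerivAt
  have hB : ∀ i : Fin 3, HasFDerivAt (fun y : EuclideanSpace ℝ (Fin 3) => 2 * y i)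
      ((2 : ℝ) • (EuclideanSpace.proj i : EuclideanSpace ℝ (Fin 3) →L[ℝ] ℝ)) x :=
    fun i => ((EuclideanSpace.proj i : EuclideanSpace ℝ (Fin 3) →L[ℝ] ℝ).hasFDerivAt).const_mul (2 : ℝ)
  have hD : ∀ i : Fin 3, HasFDerivAt (fun y => fderiv ℝ P y (e i))
      (fderiv ℝ (fun y => fderiv ℝ P y (e i)) x) x :=
    fun i => ((hΦc i).differentiable (by simp) x).hasFDerivAt
  have hG : ∀ i : Fin 3,
      fderiv ℝ (fun y => Ff1 k l (‖y‖ ^ 2) * (2 * y i) * P y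
          + Ff k l (‖y‖ ^ 2) * (fderiv ℝ P y (e i))) x (e i)
        = 4 * (x i) ^ 2 * Ff2 k l u * P x + 2 * Ff1 k l u * P x
          + 4 * (x i) * Ff1 k l u * (fderiv ℝ P x (e i))
          + Ff k l u * (fderiv ℝ (fun y => fderiv ℝ P y (e i)) x (e i)) := by
    intro i
    have hH := ((hA.fun_mul (hB i)).fun_mul hC).fun_add (hE2.fun_mul (hD i))
    rw [hH.fderiv]
    simp [he, EuclideanSpace.inner_single_right, EuclideanSpace.single_apply]
    ring
  have hnorm : ∑ i : Fin 3, x i * x i = u := by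
    rw [hu, ← real_inner_self_eq_norm_sq]
    simp only [PiLp.inner_apply, RCLike.inner_apply, conj_trivial]
  have hxsum : (∑ i : Fin 3, x i • e i) = x := by
    simpa [he, EuclideanSpace.basisFun_apply, EuclideanSpace.basisFun_repr]
      using (EuclideanSpace.basisFun (Fin 3) ℝ).sum_repr x
  have hEuler : fderiv ℝ P x x = (l : ℝ) * P x := by
    have h1 : HasDerivAt (fun c : ℝ => P (c • x)) (fderiv ℝ P ((1 : ℝ) • x) ((1 : ℝ) • x)) 1 :=
      (hPdiff ((1 : ℝ) • x)).hasFDerivAt.comp_hasDerivAt 1 ((hasDerivAt_id (1 : ℝ)).smul_const x)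
    rw [one_smul] at h1
    have h2 : HasDerivAt (fun c : ℝ => c ^ l * P x) ((l : ℝ) * P x) 1 := by
      simpa using (hasDerivAt_pow l (1 : ℝ)).mul_const (P x)
    have h1' : HasDerivAt (fun c : ℝ => c ^ l * P x) (fderiv ℝ P x x) 1 := by
      have hfe : (fun c : ℝ => c ^ l * P x) = fun c : ℝ => P (c • x) :=
        funext fun c => (hhom c x).symm
      rw [hfe]
      exact h1
    exact h1'.unique h2
  have hsum_dir : ∑ i : Fin 3, x i * fderiv ℝ P x (e i) = (l : ℝ) * P x := by
    have h0 : (fderiv ℝ P x) (∑ i : Fin 3, x i • e i) = (l : ℝ) * P x := by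
      rw [hxsum, hEuler]
    rw [← h0, map_sum]
    simp
  have hlap : laplacian (fun y => Ff k l (‖y‖ ^ 2) * P y) x
      = 4 * u * Ff2 k l u * P x + 6 * Ff1 k l u * P x + 4 * (l : ℝ) * Ff1 k l u * P x := by
    unfold laplacian
    have step1 : ∀ i : Fin 3,
        fderiv ℝ (fun y => fderiv ℝ (fun z => Ff k l (‖z‖ ^ 2) * P z) y (e i)) x (e i)
          = 4 * (x i) ^ 2 * Ff2 k l u * P x + 2 * Ff1 k l u * P x
            + 4 * (x i) * Ff1 k l u * (fderiv ℝ P x (e i))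
            + Ff k l u * (fderiv ℝ (fun y => fderiv ℝ P y (e i)) x (e i)) := by
      intro i
      rw [hfd1 i, hG i]
    rw [Finset.sum_congr rfl fun i _ => step1 i]
    rw [Finset.sum_add_distrib, Finset.sum_add_distrib, Finset.sum_add_distrib]
    have e1 : (∑ i : Fin 3, 4 * (x i) ^ 2 * Ff2 k l u * P x)
        = (∑ i : Fin 3, x i * x i) * (4 * Ff2 k l u * P x) := by
      rw [Finset.sum_mul]
      exact Finset.sum_congr rfl fun i _ => by ring
    have e3 : (∑ i : Fin 3, 4 * (x i) * Ff1 k l u * (fderiv ℝ P x (e i)))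
        = (∑ i : Fin 3, x i * fderiv ℝ P x (e i)) * (4 * Ff1 k l u) := by
      rw [Finset.sum_mul]
      exact Finset.sum_congr rfl fun i _ => by ring
    have e4 : (∑ i : Fin 3, Ff k l u * (fderiv ℝ (fun y => fderiv ℝ P y (e i)) x (e i)))
        = Ff k l u * (∑ i : Fin 3, fderiv ℝ (fun y => fderiv ℝ P y (e i)) x (e i)) := by
      rw [Finset.mul_sum]
    have e5 : (∑ i : Fin 3, fderiv ℝ (fun y => fderiv ℝ P y (e i)) x (e i)) = 0 := hharm x
    rw [e1, e3, e4, e5, hnorm, hsum_dir]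
    simp [Finset.sum_const]
    ring
  show -laplacian (fun y => Ff k l (‖y‖ ^ 2) * P y) x + u * (Ff k l u * P x)
      = (4 * (k : ℝ) + 2 * (l : ℝ) + 3) * (Ff k l u * P x)
  rw [hlap]
  linear_combination (-(P x)) * Ff_ode k l u
end

section
/- The eigenvalues of the quantum harmonic oscillator in ℝ³, i.e., the numbers λ for which there is a nonzero Schwartz (or polynomially-weighted Gaussian) solution of −Δψ + |x|²ψ = λψ, are exactly the numbers of the form 2N + 3 with N a nonnegative integer. -/
open MvPolynomial

noncomputable section
abbrev E3 := EuclideanSpace ℝ (Fin 3)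

def sP : MvPolynomial (Fin 3) ℝ := ∑ i : Fin 3, X i ^ 2
def qP : MvPolynomial (Fin 3) ℝ := C (-(1/2) : ℝ) * sP

lemma hnorm (y : E3) : ‖y‖ ^ 2 = ∑ i : Fin 3, (y i) ^ 2 := by
  rw [EuclideanSpace.norm_eq, Real.sq_sqrt (by positivity)]
  simp [Real.norm_eq_abs, sq_abs]

lemma hq (y : E3) : eval (fun i => y i) qP = -‖y‖ ^ 2 / 2 := by
  simp [qP, sP, hnorm y]
  ring

lemma hqd (i : Fin 3) : pderiv i qP = - X i := by
  fin_cases i <;>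
    · simp [qP, sP, Fin.sum_univ_three, pderiv_pow, pderiv_X_self, pderiv_X_of_ne]
      rw [show (2 : MvPolynomial (Fin 3) ℝ) = C 2 from (map_ofNat C 2).symm, ← mul_assoc, ← C_mul]
      norm_num

def Dop (i : Fin 3) (p : MvPolynomial (Fin 3) ℝ) : MvPolynomial (Fin 3) ℝ :=
  pderiv i p - X i * p

lemma hasFDerivAt_ev (p : MvPolynomial (Fin 3) ℝ) (x : E3) :
    HasFDerivAt (fun y : E3 => eval (fun i => y i) p)
      (∑ i : Fin 3, eval (fun j => x j) (pderiv i p) • (EuclideanSpace.proj i : E3 →L[ℝ] ℝ)) x := by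
  induction p using MvPolynomial.induction_on with
  | C a =>
      simp only [eval_C, pderiv_C, map_zero, zero_smul, Finset.sum_const_zero]
      exact hasFDerivAt_const a x
  | add p q hp hq =>
      simp only [map_add, add_smul, Finset.sum_add_distrib]
      exact hp.add hq
  | mul_X p n hp =>
      have hX : HasFDerivAt (fun y : E3 => y n) (EuclideanSpace.proj n : E3 →L[ℝ] ℝ) x :=
        (EuclideanSpace.proj n : E3 →L[ℝ] ℝ).hasFDerivAt
      have h := hp.mul hX
      have hD : (∑ i : Fin 3, eval (fun j => x j) (pderiv i (p * X n)) • (EuclideanSpace.proj i : E3 →L[ℝ] ℝ))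
          = (eval fun i => x i) p • (EuclideanSpace.proj n : E3 →L[ℝ] ℝ) +
            x n • ∑ i : Fin 3, (eval fun j => x j) (pderiv i p) • (EuclideanSpace.proj i : E3 →L[ℝ] ℝ) := by
        ext v
        fin_cases n <;>
          simp [Fin.sum_univ_three, pderiv_mul, pderiv_X_self, pderiv_X_of_ne] <;> ring
      simp only [map_mul, eval_X]
      rw [hD]
      exact h

lemma hasFDerivAt_Phi (p : MvPolynomial (Fin 3) ℝ) (x : E3) :
    HasFDerivAt (fun y : E3 => eval (fun i => y i) p * Real.exp (-‖y‖ ^ 2 / 2))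
      (Real.exp (-‖x‖ ^ 2 / 2) •
        ∑ i : Fin 3, eval (fun j => x j) (Dop i p) • (EuclideanSpace.proj i : E3 →L[ℝ] ℝ)) x := by
  have h2 := (hasFDerivAt_ev qP x).exp
  simp only [hq] at h2
  have h := (hasFDerivAt_ev p x).mul h2
  have hEq : (Real.exp (-‖x‖ ^ 2 / 2) •
        ∑ i : Fin 3, eval (fun j => x j) (Dop i p) • (EuclideanSpace.proj i : E3 →L[ℝ] ℝ))
      = (eval fun i => x i) p •
          (Real.exp (-‖x‖ ^ 2 / 2) •
            ∑ i : Fin 3, eval (fun j => x j) (pderiv i qP) • (EuclideanSpace.proj i : E3 →L[ℝ] ℝ)) +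
        Real.exp (-‖x‖ ^ 2 / 2) •
          ∑ i : Fin 3, eval (fun j => x j) (pderiv i p) • (EuclideanSpace.proj i : E3 →L[ℝ] ℝ) := by
    ext v
    simp only [Dop, hqd, Fin.sum_univ_three, ContinuousLinearMap.coe_smul', Pi.smul_apply,
      ContinuousLinearMap.add_apply, ContinuousLinearMap.coe_sum', Finset.sum_apply,
      smul_eq_mul, map_sub, map_mul, map_neg, eval_X, ContinuousLinearMap.coe_add']
    simp only [Pi.add_apply, Pi.smul_apply, Pi.neg_apply, smul_eq_mul, PiLp.proj_apply]
    ring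
  rw [hEq]
  exact h

lemma fderiv_Phi (p : MvPolynomial (Fin 3) ℝ) (x : E3) (i : Fin 3) :
    fderiv ℝ (fun y : E3 => eval (fun i => y i) p * Real.exp (-‖y‖ ^ 2 / 2)) x
        (EuclideanSpace.single i 1)
      = eval (fun j => x j) (Dop i p) * Real.exp (-‖x‖ ^ 2 / 2) := by
  rw [(hasFDerivAt_Phi p x).fderiv]
  simp only [ContinuousLinearMap.coe_smul', Pi.smul_apply, ContinuousLinearMap.coe_sum',
    Finset.sum_apply, smul_eq_mul, PiLp.proj_apply, EuclideanSpace.single_apply]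
  rw [Finset.sum_eq_single i (fun b _ hb => by simp [if_neg hb]) (by simp)]
  simp [mul_comm]

lemma lap_Phi (p : MvPolynomial (Fin 3) ℝ) (x : E3) :
    laplacian (fun y : E3 => eval (fun i => y i) p * Real.exp (-‖y‖ ^ 2 / 2)) x
      = eval (fun j => x j) (∑ i : Fin 3, Dop i (Dop i p)) * Real.exp (-‖x‖ ^ 2 / 2) := by
  unfold laplacian
  have h : ∀ i : Fin 3, (fun y : E3 =>
      fderiv ℝ (fun y : E3 => eval (fun i => y i) p * Real.exp (-‖y‖ ^ 2 / 2)) y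
        (EuclideanSpace.single i 1))
      = fun y : E3 => eval (fun j => y j) (Dop i p) * Real.exp (-‖y‖ ^ 2 / 2) :=
    fun i => funext fun y => fderiv_Phi p y i
  rw [Finset.sum_congr rfl fun i _ => by rw [h i, fderiv_Phi]]
  rw [map_sum, Finset.sum_mul]

lemma pde_iff (p : MvPolynomial (Fin 3) ℝ) (lam : ℝ) :
    (∀ x : E3,
        -laplacian (fun y => eval (fun i => y i) p * Real.exp (-‖y‖ ^ 2 / 2)) x +
          ‖x‖ ^ 2 * (eval (fun i => x i) p * Real.exp (-‖x‖ ^ 2 / 2)) =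
        lam * (eval (fun i => x i) p * Real.exp (-‖x‖ ^ 2 / 2))) ↔
    (-(∑ i : Fin 3, Dop i (Dop i p)) + sP * p = C lam * p) := by
  constructor
  · intro h
    apply MvPolynomial.funext
    intro v
    have hh := h ((WithLp.equiv 2 (Fin 3 → ℝ)).symm v)
    set x : E3 := (WithLp.equiv 2 (Fin 3 → ℝ)).symm v with hxdef
    have hv : (fun i => x i) = v := funext fun i => rfl
    rw [lap_Phi] at hh
    have hs : eval (fun i => x i) sP = ‖x‖ ^ 2 := by simp [sP, hnorm]
    have key : eval (fun i => x i) (-(∑ i : Fin 3, Dop i (Dop i p)) + sP * p)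
        = eval (fun i => x i) (C lam * p) := by
      apply mul_right_cancel₀ (Real.exp_ne_zero (-‖x‖ ^ 2 / 2))
      simp only [map_add, map_neg, map_mul, eval_C, hs]
      linear_combination hh
    rw [hv] at key
    exact key
  · intro hP x
    have hc := congrArg (eval (fun i => x i)) hP
    simp only [map_add, map_neg, map_mul, eval_C] at hc
    rw [lap_Phi]
    have hs : eval (fun i => x i) sP = ‖x‖ ^ 2 := by simp [sP, hnorm]
    rw [hs] at hc
    linear_combination Real.exp (-‖x‖ ^ 2 / 2) * hc

lemma reduce (p : MvPolynomial (Fin 3) ℝ) :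
    -(∑ i : Fin 3, Dop i (Dop i p)) + sP * p
      = -(∑ i : Fin 3, pderiv i (pderiv i p)) + C 3 * p
          + C 2 * ∑ i : Fin 3, X i * pderiv i p := by
  simp only [Dop, sP, Fin.sum_univ_three, map_sub, pderiv_mul, pderiv_X_self, map_ofNat]
  ring

lemma coeff_pderiv (i : Fin 3) (f : MvPolynomial (Fin 3) ℝ) (m : Fin 3 →₀ ℕ) :
    coeff m (pderiv i f) = ((m i : ℝ) + 1) * coeff (m + Finsupp.single i 1) f := by
  induction f using MvPolynomial.induction_on' with
  | monomial s a =>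
      rw [pderiv_monomial, coeff_monomial, coeff_monomial]
      by_cases h : s = m + Finsupp.single i 1
      · subst h
        rw [if_pos (by rw [add_tsub_cancel_right]), if_pos rfl]
        simp [Finsupp.add_apply, Finsupp.single_apply]
        ring
      · rw [if_neg h]
        by_cases h2 : s - Finsupp.single i 1 = m
        · rw [if_pos h2]
          by_cases h3 : s i = 0
          · simp [h3]
          · exact absurd (by rw [← h2, tsub_add_cancel_of_le
              (Finsupp.single_le_iff.mpr (Nat.one_le_iff_ne_zero.mpr h3))]) h
        · rw [if_neg h2, mul_zero]
  | add p q hp hq =>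
      simp only [map_add, coeff_add, hp, hq]
      ring

lemma coeff_X_mul_pderiv (i : Fin 3) (p : MvPolynomial (Fin 3) ℝ) (m : Fin 3 →₀ ℕ) :
    coeff m (X i * pderiv i p) = (m i : ℝ) * coeff m p := by
  classical
  rw [coeff_X_mul']
  by_cases h : i ∈ m.support
  · rw [if_pos h, coeff_pderiv]
    have h1 : (1 : ℕ) ≤ m i := Nat.one_le_iff_ne_zero.mpr (Finsupp.mem_support_iff.mp h)
    rw [tsub_add_cancel_of_le (Finsupp.single_le_iff.mpr h1)]
    congr 1
    rw [Finsupp.tsub_apply, Finsupp.single_apply, if_pos rfl]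
    rw [Nat.cast_sub h1]
    ring
  · rw [if_neg h]
    have h0 : m i = 0 := Finsupp.notMem_support_iff.mp h
    simp [h0]

lemma sum_support_add_single (m : Fin 3 →₀ ℕ) (i : Fin 3) :
    ∑ j ∈ (m + Finsupp.single i 1).support, ((m + Finsupp.single i 1) : Fin 3 →₀ ℕ) j
      = (∑ j ∈ m.support, m j) + 1 := by
  have h1 : ∑ j ∈ (m + Finsupp.single i 1).support, ((m + Finsupp.single i 1) : Fin 3 →₀ ℕ) j
      = (m + Finsupp.single i 1).sum fun _ n => n := rfl
  have h2 : ∑ j ∈ m.support, m j = m.sum fun _ n => n := rfl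
  rw [h1, h2, Finsupp.sum_add_index' (fun _ => rfl) (fun _ _ _ => rfl),
    Finsupp.sum_single_index rfl]

lemma coeff_pderiv2_top (i : Fin 3) (p : MvPolynomial (Fin 3) ℝ) (m : Fin 3 →₀ ℕ)
    (hm : p.totalDegree ≤ ∑ j ∈ m.support, m j) :
    coeff m (pderiv i (pderiv i p)) = 0 := by
  rw [coeff_pderiv, coeff_pderiv, coeff_eq_zero_of_totalDegree_lt, mul_zero, mul_zero]
  rw [sum_support_add_single, sum_support_add_single]
  omega

lemma exists_top (p : MvPolynomial (Fin 3) ℝ) (hp : p ≠ 0) :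
    ∃ m ∈ p.support, (∑ j ∈ m.support, m j) = p.totalDegree := by
  obtain ⟨m, hm, h⟩ := Finset.exists_mem_eq_sup p.support (support_nonempty.mpr hp)
    (fun s => s.sum fun _ e => e)
  exact ⟨m, hm, h.symm⟩

lemma eigen_eq (p : MvPolynomial (Fin 3) ℝ) (hp : p ≠ 0) (lam : ℝ)
    (h : -(∑ i : Fin 3, Dop i (Dop i p)) + sP * p = C lam * p) :
    lam = 2 * p.totalDegree + 3 := by
  rw [reduce] at h
  obtain ⟨m, hm, hd⟩ := exists_top p hp
  have hc : coeff m p ≠ 0 := mem_support_iff.mp hm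
  have hco := congrArg (coeff m) h
  simp only [coeff_add, coeff_neg, coeff_C_mul, Fin.sum_univ_three] at hco
  rw [coeff_pderiv2_top 0 p m hd.ge, coeff_pderiv2_top 1 p m hd.ge,
    coeff_pderiv2_top 2 p m hd.ge, coeff_X_mul_pderiv, coeff_X_mul_pderiv,
    coeff_X_mul_pderiv] at hco
  have hsum : (m 0 : ℝ) + m 1 + m 2 = (p.totalDegree : ℝ) := by
    have h1 : ∑ j ∈ m.support, m j = m.sum fun _ n => n := rfl
    have h2 : (m.sum fun _ n => n) = ∑ j : Fin 3, m j := Finsupp.sum_fintype _ _ (fun _ => rfl)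
    rw [h1, h2, Fin.sum_univ_three] at hd
    exact_mod_cast congrArg (Nat.cast : ℕ → ℝ) hd
  have hkey : (2 * (p.totalDegree : ℝ) + 3) * coeff m p = lam * coeff m p := by
    rw [← hsum]
    linear_combination hco
  exact (mul_right_cancel₀ hc hkey).symm

def herm : ℕ → MvPolynomial (Fin 3) ℝ
  | 0 => 1
  | n + 1 => C 2 * (X 0 * herm n) - pderiv 0 (herm n)

lemma herm_succ (n : ℕ) : herm (n + 1) = C 2 * (X 0 * herm n) - pderiv 0 (herm n) := rfl

lemma herm_deriv : ∀ n : ℕ, pderiv 0 (herm (n + 1)) = C ((2 * (n + 1) : ℕ) : ℝ) * herm n := by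
  intro n
  induction n using Nat.strong_induction_on with
  | _ n ih =>
    match n with
    | 0 =>
        rw [herm_succ, show herm 0 = 1 from rfl, pderiv_one]
        simp [pderiv_C_mul, pderiv_mul, pderiv_X_self]
    | m + 1 =>
        have ih1 := ih m (by omega)
        have hC : (C ((2 * (m + 2) : ℕ) : ℝ) : MvPolynomial (Fin 3) ℝ)
            = C 2 + C ((2 * (m + 1) : ℕ) : ℝ) := by
          rw [← C_add]
          push_cast
          ring
        rw [herm_succ (m + 1), ih1, map_sub, pderiv_C_mul, pderiv_mul, pderiv_X_self,
          pderiv_C_mul, ih1, hC, herm_succ m]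
        ring

lemma herm_other (j : Fin 3) (hj : j ≠ 0) : ∀ n : ℕ, pderiv j (herm n) = 0 := by
  intro n
  induction n using Nat.strong_induction_on with
  | _ n ih =>
    match n with
    | 0 => exact pderiv_one
    | m + 1 =>
        have h2 : pderiv j (pderiv 0 (herm m)) = 0 := by
          match m with
          | 0 => rw [show herm 0 = 1 from rfl, pderiv_one, map_zero]
          | k + 1 => rw [herm_deriv k, pderiv_C_mul, ih k (by omega), mul_zero]
        rw [herm_succ, map_sub, pderiv_C_mul, pderiv_mul, pderiv_X_of_ne (Ne.symm hj),
          ih m (by omega), h2]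
        ring

lemma herm_ode (n : ℕ) :
    pderiv 0 (pderiv 0 (herm n)) - C 2 * (X 0 * pderiv 0 (herm n))
      + C ((2 * n : ℕ) : ℝ) * herm n = 0 := by
  match n with
  | 0 =>
      rw [show herm 0 = 1 from rfl, pderiv_one, map_zero]
      simp
  | m + 1 =>
      rw [herm_deriv m, pderiv_C_mul, herm_succ m]
      ring

lemma herm_deg : ∀ n : ℕ, (herm n).totalDegree ≤ n := by
  intro n
  induction n using Nat.strong_induction_on with
  | _ n ih =>
    match n with
    | 0 => rw [show herm 0 = 1 from rfl]; simp [totalDegree_one]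
    | m + 1 =>
        have hd : (pderiv 0 (herm m)).totalDegree ≤ m := by
          match m with
          | 0 => rw [show herm 0 = 1 from rfl, pderiv_one]; simp
          | k + 1 =>
              rw [herm_deriv k]
              refine (totalDegree_mul _ _).trans ?_
              simp only [totalDegree_C, zero_add]
              exact (ih k (by omega)).trans (by omega)
        rw [herm_succ]
        refine (totalDegree_sub _ _).trans ?_
        refine max_le ?_ (hd.trans (by omega))
        refine (totalDegree_mul _ _).trans ?_
        simp only [totalDegree_C, zero_add]
        refine (totalDegree_mul _ _).trans ?_
        have h1 := totalDegree_X (R := ℝ) (0 : Fin 3)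
        have h2 := ih m (by omega)
        omega

lemma herm_coeff (n : ℕ) :
    coeff (Finsupp.single 0 n) (herm n) = 2 ^ n := by
  induction n with
  | zero =>
      rw [show herm 0 = 1 from rfl, Finsupp.single_zero]
      simp
  | succ n ih =>
      rw [herm_succ, coeff_sub, coeff_C_mul]
      have hX : coeff (Finsupp.single 0 (n + 1)) (X 0 * herm n) = 2 ^ n := by
        classical
        rw [coeff_X_mul']
        rw [if_pos (by simp)]
        rw [show Finsupp.single (0 : Fin 3) (n + 1) - Finsupp.single 0 1
            = Finsupp.single 0 n from by
          ext j; simp [Finsupp.single_apply, Finsupp.tsub_apply]]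
        exact ih
      have hD : coeff (Finsupp.single 0 (n + 1)) (pderiv 0 (herm n)) = 0 := by
        rw [coeff_pderiv]
        rw [show Finsupp.single (0 : Fin 3) (n + 1) + Finsupp.single 0 1
            = Finsupp.single 0 (n + 2) from by rw [← Finsupp.single_add]]
        rw [coeff_eq_zero_of_totalDegree_lt, mul_zero]
        have h1 : ∑ j ∈ (Finsupp.single (0 : Fin 3) (n + 2)).support,
            Finsupp.single (0 : Fin 3) (n + 2) j = n + 2 := by
          rw [show (∑ j ∈ (Finsupp.single (0 : Fin 3) (n + 2)).support,
            Finsupp.single (0 : Fin 3) (n + 2) j) = (Finsupp.single (0 : Fin 3) (n + 2)).sum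
              fun _ e => e from rfl, Finsupp.sum_single_index rfl]
        rw [h1]
        have := herm_deg n
        omega
      rw [hX, hD]
      ring

lemma herm_ne (n : ℕ) : herm n ≠ 0 := by
  intro h
  have := herm_coeff n
  rw [h] at this
  simp at this
  exact absurd this (by positivity)

lemma herm_eigen (N : ℕ) :
    -(∑ i : Fin 3, Dop i (Dop i (herm N))) + sP * herm N
      = C (2 * (N : ℝ) + 3) * herm N := by
  rw [reduce]
  have h1 := herm_other 1 (by decide) N
  have h2 := herm_other 2 (by decide) N
  simp only [Fin.sum_univ_three, h1, h2, map_zero, mul_zero, add_zero]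
  have hode := herm_ode N
  have hC : (C ((2 * N : ℕ) : ℝ) : MvPolynomial (Fin 3) ℝ) + C 3 = C (2 * (N : ℝ) + 3) := by
    rw [← C_add]
    push_cast
    ring
  linear_combination (-1 : MvPolynomial (Fin 3) ℝ) * hode + herm N * hC

end

theorem harmonic_oscillator_spectrum (lam : ℝ) :
    (∃ p : MvPolynomial (Fin 3) ℝ, p ≠ 0 ∧
      ∀ x : EuclideanSpace ℝ (Fin 3),
        -laplacian (fun y => MvPolynomial.eval (fun i => y i) p * Real.exp (-‖y‖ ^ 2 / 2)) x +
          ‖x‖ ^ 2 * (MvPolynomial.eval (fun i => x i) p * Real.exp (-‖x‖ ^ 2 / 2)) =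
        lam * (MvPolynomial.eval (fun i => x i) p * Real.exp (-‖x‖ ^ 2 / 2))) ↔
    ∃ N : ℕ, lam = 2 * N + 3 := by
  constructor
  · rintro ⟨p, hp0, hPDE⟩
    exact ⟨p.totalDegree, eigen_eq p hp0 lam ((pde_iff p lam).mp hPDE)⟩
  · rintro ⟨N, rfl⟩
    exact ⟨herm N, herm_ne N, (pde_iff (herm N) _).mpr (herm_eigen N)⟩
end
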